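/- Let M be a finitely-valued random variable and Y_1,…,Y_ℓ random variables with values in a common finite set 𝒳, and let 𝔄⁰ be a collection of ζ-element subsets of {1,…,ℓ}. If I(M ; (Y_{s_1},…,Y_{s_ζ})) = 0 for every s = {s_1,…,s_ζ} ∈ 𝔄⁰, then for every general adaptive attack α compatible with 𝔄⁰, with observation vector Z, I(M ; Z) = 0. -/

import Mathlib

open Finset

/-- Probability that the finitely-valued random variable `X` takes value `x`,
with respect to the probability mass function `p` on the finite sample space `Ω`. -/
noncomputable def pmfProb {Ω : Type*} [Fintype Ω] {α : Type*} [Fintype α] [DecidableEq α]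
    (p : Ω → ℝ) (X : Ω → α) (x : α) : ℝ :=
  ∑ ω, if X ω = x then p ω else 0

/-- Shannon entropy (natural logarithm) of the random variable `X`. -/
noncomputable def entH {Ω : Type*} [Fintype Ω] {α : Type*} [Fintype α] [DecidableEq α]
    (p : Ω → ℝ) (X : Ω → α) : ℝ :=
  ∑ x, Real.negMulLog (pmfProb p X x)

/-- Conditional Shannon entropy `H(X|Y) = H(X,Y) - H(Y)`. -/
noncomputable def condH {Ω : Type*} [Fintype Ω] {α β : Type*} [Fintype α] [DecidableEq α]
    [Fintype β] [DecidableEq β] (p : Ω → ℝ) (X : Ω → α) (Y : Ω → β) : ℝ :=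
  entH p (fun ω => (X ω, Y ω)) - entH p Y

/-- Mutual information `I(X;Y) = H(X) + H(Y) - H(X,Y)`. -/
noncomputable def mutInfo {Ω : Type*} [Fintype Ω] {α β : Type*} [Fintype α] [DecidableEq α]
    [Fintype β] [DecidableEq β] (p : Ω → ℝ) (X : Ω → α) (Y : Ω → β) : ℝ :=
  entH p X + entH p Y - entH p (fun ω => (X ω, Y ω))

/-- The conditional probability mass function given an event `E`. -/
noncomputable def condPMF {Ω : Type*} [Fintype Ω] (p : Ω → ℝ) (E : Ω → Prop)
    [DecidablePred E] : Ω → ℝ :=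
  fun ω => if E ω then p ω / (∑ ω' ∈ Finset.univ.filter E, p ω') else 0

/-!
Unrolling the recursion, `Z = z` holds exactly when `Y_{α_j(z_1, …, z_{j-1})} = z_j` for every
`j`. So the event `{Z = z}` is determined by the non-adaptive observation `Y_s` for the single set
`s = {α_j(z_1, …, z_{j-1})}`, which lies in `𝔄` by compatibility. By the equality case of Gibbs'
inequality, `I(M ; Y_s) = 0` means that `M` is independent of `Y_s`, hence of `{Z = z}`. Thus the
joint law of `(M, Z)` factorizes, and `I(M ; Z) = 0`.
-/

namespace Real

lemma mul_negMulLog_div {a w : ℝ} (hac : w = 0 → a = 0) :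
    w * negMulLog (a / w) = negMulLog a + a * log w := by
  rcases eq_or_ne w 0 with hw | hw
  · simp [hw, hac hw]
  rcases eq_or_ne a 0 with ha | ha
  · simp [ha]
  rw [negMulLog, negMulLog, log_div ha hw]
  field_simp
  ring

/-- Equality case of Gibbs' inequality. -/
lemma eq_of_sum_mul_negMulLog_div_eq_zero {ι : Type*} [Fintype ι] {a w : ι → ℝ}
    (ha : ∀ i, 0 ≤ a i) (hw : ∀ i, 0 ≤ w i) (ha1 : ∑ i, a i = 1) (hw1 : ∑ i, w i = 1)
    (hac : ∀ i, w i = 0 → a i = 0) (h : ∑ i, w i * negMulLog (a i / w i) = 0) :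
    a = w := by
  have hmean : ∑ i, w i • (a i / w i) = 1 := by
    rw [← ha1]
    refine Finset.sum_congr rfl fun i _ => ?_
    rcases eq_or_ne (w i) 0 with h0 | h0
    · simp [h0, hac i h0]
    · exact mul_div_cancel₀ _ h0
  have hjensen := (strictConcaveOn_negMulLog.map_sum_eq_iff' (t := Finset.univ)
    (fun i _ => hw i) hw1 fun i _ => Set.mem_Ici.2 (div_nonneg (ha i) (hw i))).1
    (by rw [hmean, negMulLog_one]; simpa using h.symm)
  funext i
  rcases eq_or_ne (w i) 0 with h0 | h0
  · rw [h0, hac i h0]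
  · have := hjensen i (Finset.mem_univ i) h0
    rwa [hmean, div_eq_one_iff_eq h0] at this

end Real

section Entropy

variable {Ω α β : Type*} [Fintype Ω] [Fintype α] [DecidableEq α] [Fintype β] [DecidableEq β]
  {p : Ω → ℝ}

lemma pmfProb_nonneg (hp : ∀ ω, 0 ≤ p ω) (X : Ω → α) (x : α) : 0 ≤ pmfProb p X x :=
  Finset.sum_nonneg fun ω _ => by split <;> simp [hp ω]

lemma sum_pmfProb (hp1 : ∑ ω, p ω = 1) (X : Ω → α) : ∑ x, pmfProb p X x = 1 := by
  unfold pmfProb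
  rw [Finset.sum_comm]
  simp [hp1]

variable (p) (X : Ω → α) (Y : Ω → β)

lemma sum_pmfProb_pair_eq_fst (x : α) :
    ∑ y, pmfProb p (fun ω => (X ω, Y ω)) (x, y) = pmfProb p X x := by
  unfold pmfProb
  rw [Finset.sum_comm]
  simp [Prod.ext_iff, ite_and]

lemma sum_pmfProb_pair_eq_snd (y : β) :
    ∑ x, pmfProb p (fun ω => (X ω, Y ω)) (x, y) = pmfProb p Y y := by
  unfold pmfProb
  rw [Finset.sum_comm]
  simp [Prod.ext_iff, ite_and]

variable {p}

lemma pmfProb_pair_le_fst (hp : ∀ ω, 0 ≤ p ω) (x : α) (y : β) :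
    pmfProb p (fun ω => (X ω, Y ω)) (x, y) ≤ pmfProb p X x :=
  sum_pmfProb_pair_eq_fst p X Y x ▸ Finset.single_le_sum
    (fun y' _ => pmfProb_nonneg hp _ (x, y')) (Finset.mem_univ y)

lemma pmfProb_pair_le_snd (hp : ∀ ω, 0 ≤ p ω) (x : α) (y : β) :
    pmfProb p (fun ω => (X ω, Y ω)) (x, y) ≤ pmfProb p Y y :=
  sum_pmfProb_pair_eq_snd p X Y y ▸ Finset.single_le_sum
    (fun x' _ => pmfProb_nonneg hp _ (x', y)) (Finset.mem_univ x)

lemma pmfProb_pair_eq_zero_of_mul_eq_zero (hp : ∀ ω, 0 ≤ p ω) {x : α} {y : β}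
    (h : pmfProb p X x * pmfProb p Y y = 0) : pmfProb p (fun ω => (X ω, Y ω)) (x, y) = 0 := by
  refine le_antisymm ?_ (pmfProb_nonneg hp _ _)
  rcases mul_eq_zero.1 h with h | h
  · exact h ▸ pmfProb_pair_le_fst X Y hp x y
  · exact h ▸ pmfProb_pair_le_snd X Y hp x y

/-- Mutual information is the Kullback–Leibler divergence of the joint law from the product
of the marginals. -/
lemma mutInfo_eq_neg_sum (hp : ∀ ω, 0 ≤ p ω) :
    mutInfo p X Y = -∑ xy : α × β, pmfProb p X xy.1 * pmfProb p Y xy.2 *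
      Real.negMulLog
        (pmfProb p (fun ω => (X ω, Y ω)) xy / (pmfProb p X xy.1 * pmfProb p Y xy.2)) := by
  have hterm : ∀ xy : α × β, pmfProb p X xy.1 * pmfProb p Y xy.2 *
      Real.negMulLog (pmfProb p (fun ω => (X ω, Y ω)) xy / (pmfProb p X xy.1 * pmfProb p Y xy.2))
      = Real.negMulLog (pmfProb p (fun ω => (X ω, Y ω)) xy)
        + pmfProb p (fun ω => (X ω, Y ω)) xy * Real.log (pmfProb p X xy.1)
        + pmfProb p (fun ω => (X ω, Y ω)) xy * Real.log (pmfProb p Y xy.2) := by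
    rintro ⟨x, y⟩
    have hac := pmfProb_pair_eq_zero_of_mul_eq_zero X Y hp (x := x) (y := y)
    rw [Real.mul_negMulLog_div hac, add_assoc, ← mul_add]
    rcases eq_or_ne (pmfProb p (fun ω => (X ω, Y ω)) (x, y)) 0 with ha | ha
    · simp [ha]
    have hq : pmfProb p X x ≠ 0 := fun h => ha (hac (by simp [h]))
    have hr : pmfProb p Y y ≠ 0 := fun h => ha (hac (by simp [h]))
    rw [Real.log_mul hq hr]
  have hfst : ∑ xy : α × β, pmfProb p (fun ω => (X ω, Y ω)) xy * Real.log (pmfProb p X xy.1) =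
      ∑ x, pmfProb p X x * Real.log (pmfProb p X x) := by
    simp_rw [Fintype.sum_prod_type, ← Finset.sum_mul, sum_pmfProb_pair_eq_fst]
  have hsnd : ∑ xy : α × β, pmfProb p (fun ω => (X ω, Y ω)) xy * Real.log (pmfProb p Y xy.2) =
      ∑ y, pmfProb p Y y * Real.log (pmfProb p Y y) := by
    simp_rw [Fintype.sum_prod_type, Finset.sum_comm (γ := α), ← Finset.sum_mul,
      sum_pmfProb_pair_eq_snd]
  rw [mutInfo, entH, entH, entH, Finset.sum_congr rfl fun xy _ => hterm xy,
    Finset.sum_add_distrib, Finset.sum_add_distrib, hfst, hsnd]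
  simp only [Real.negMulLog, neg_mul, Finset.sum_neg_distrib]
  ring

lemma mutInfo_eq_zero_iff (hp : ∀ ω, 0 ≤ p ω) (hp1 : ∑ ω, p ω = 1) :
    mutInfo p X Y = 0 ↔
      ∀ x y, pmfProb p (fun ω => (X ω, Y ω)) (x, y) = pmfProb p X x * pmfProb p Y y := by
  rw [mutInfo_eq_neg_sum X Y hp, neg_eq_zero]
  constructor
  · intro h x y
    have hgibbs := Real.eq_of_sum_mul_negMulLog_div_eq_zero (pmfProb_nonneg hp _)
      (fun xy : α × β => mul_nonneg (pmfProb_nonneg hp X xy.1) (pmfProb_nonneg hp Y xy.2))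
      (sum_pmfProb hp1 _) (by simp [Fintype.sum_prod_type, ← Finset.mul_sum, sum_pmfProb hp1])
      (fun _ => pmfProb_pair_eq_zero_of_mul_eq_zero X Y hp) h
    exact congrFun hgibbs (x, y)
  · intro h
    refine Finset.sum_eq_zero fun xy _ => ?_
    rcases eq_or_ne (pmfProb p X xy.1 * pmfProb p Y xy.2) 0 with h0 | h0
    · rw [h0, zero_mul]
    · rw [h, div_self h0, Real.negMulLog_one, mul_zero]

end Entropy

section Events

variable {Ω α β γ : Type*} [Fintype Ω] [Fintype α] [DecidableEq α] [Fintype β] [DecidableEq β]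
  [Fintype γ] [DecidableEq γ] {p : Ω → ℝ} {X : Ω → α} {Y : Ω → β} {Z : Ω → γ} {z : γ}
  {E : β → Prop} [DecidablePred E]

lemma pmfProb_eq_sum_filter_of_iff (h : ∀ ω, Z ω = z ↔ E (Y ω)) :
    pmfProb p Z z = ∑ y ∈ Finset.univ.filter E, pmfProb p Y y := by
  unfold pmfProb
  rw [Finset.sum_comm]
  refine Finset.sum_congr rfl fun ω _ => ?_
  simp [Finset.sum_ite_eq, h ω]

lemma pmfProb_pair_eq_mul_of_iff
    (hXY : ∀ x y, pmfProb p (fun ω => (X ω, Y ω)) (x, y) = pmfProb p X x * pmfProb p Y y)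
    (h : ∀ ω, Z ω = z ↔ E (Y ω)) (x : α) :
    pmfProb p (fun ω => (X ω, Z ω)) (x, z) = pmfProb p X x * pmfProb p Z z := by
  rw [pmfProb_eq_sum_filter_of_iff h,
    pmfProb_eq_sum_filter_of_iff (Y := fun ω => (X ω, Y ω))
      (E := fun xy : α × β => xy.1 = x ∧ E xy.2)
      (by simp [Prod.ext_iff, h])]
  simp [Finset.sum_filter, Fintype.sum_prod_type, ite_and, hXY, Finset.mul_sum]

end Events

lemma attack_eq_iff {𝒳 : Type*} {ℓ ζ : ℕ} (α : (j : Fin ζ) → (Fin (j : ℕ) → 𝒳) → Fin ℓ)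
    (y : Fin ℓ → 𝒳) {z' : Fin ζ → 𝒳}
    (hz' : ∀ j : Fin ζ, z' j = y (α j (fun i => z' ⟨i.1, i.2.trans j.2⟩))) (z : Fin ζ → 𝒳) :
    z' = z ↔ ∀ j : Fin ζ, y (α j (fun i => z ⟨i.1, i.2.trans j.2⟩)) = z j := by
  refine ⟨fun h j => h ▸ (hz' j).symm, fun h => funext fun ⟨n, hn⟩ => ?_⟩
  induction n using Nat.strong_induction_on with
  | _ n ih =>
    have hprefix : (fun i : Fin n => z' ⟨i.1, i.2.trans hn⟩) = fun i => z ⟨i.1, i.2.trans hn⟩ :=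
      funext fun i => ih i.1 i.2 (i.2.trans hn)
    rw [hz', hprefix, h]

theorem adaptive_attack_perfect_secrecy_general {Ω μ 𝒳 : Type*} [Fintype Ω] [Fintype μ]
    [DecidableEq μ] [Fintype 𝒳] [DecidableEq 𝒳]
    (p : Ω → ℝ) (hp : ∀ ω, 0 ≤ p ω) (hp1 : ∑ ω, p ω = 1)
    (ℓ ζ : ℕ) (M : Ω → μ) (Y : Fin ℓ → Ω → 𝒳)
    (𝔄 : Finset (Finset (Fin ℓ)))
    (hsec : ∀ s ∈ 𝔄, mutInfo p M (fun ω (e : ↥s) => Y e.1 ω) = 0)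
    (α : (j : Fin ζ) → (Fin (j : ℕ) → 𝒳) → Fin ℓ)
    (hcompat : ∀ z : Fin ζ → 𝒳,
      (Finset.image
        (fun j : Fin ζ => α j (fun i => z ⟨i.1, i.2.trans j.2⟩)) Finset.univ) ∈ 𝔄)
    (Z : Ω → Fin ζ → 𝒳)
    (hZ : ∀ ω (j : Fin ζ),
      Z ω j = Y (α j (fun i => Z ω ⟨i.1, i.2.trans j.2⟩)) ω) :
    mutInfo p M Z = 0 := by
  classical
  refine (mutInfo_eq_zero_iff M Z hp hp1).2 fun m z => ?_
  let s := Finset.image (fun j : Fin ζ => α j (fun i => z ⟨i.1, i.2.trans j.2⟩)) Finset.univ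
  have hmem (j : Fin ζ) : α j (fun i => z ⟨i.1, i.2.trans j.2⟩) ∈ s :=
    Finset.mem_image_of_mem _ (Finset.mem_univ j)
  have hindep := (mutInfo_eq_zero_iff M (fun ω (e : ↥s) => Y e.1 ω) hp hp1).1 (hsec s (hcompat z))
  exact pmfProb_pair_eq_mul_of_iff hindep (E := fun y => ∀ j, y ⟨_, hmem j⟩ = z j)
    (fun ω => attack_eq_iff α (fun k => Y k ω) (hZ ω) z) m

/-- paper's Corollary 1 / `T7C`: if `I(M ; Y_s) = 0` for every
`s ∈ 𝔄`, then for every general adaptive attack `α` compatible with `𝔄`, with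
observation vector `Z`, `I(M ; Z) = 0`. -/
theorem adaptive_attack_perfect_secrecy {Ω μ 𝒳 : Type*} [Fintype Ω] [Fintype μ]
    [DecidableEq μ] [Fintype 𝒳] [DecidableEq 𝒳]
    (p : Ω → ℝ) (hp : ∀ ω, 0 ≤ p ω) (hp1 : ∑ ω, p ω = 1)
    (ℓ ζ : ℕ) (M : Ω → μ) (Y : Fin ℓ → Ω → 𝒳)
    (𝔄 : Finset (Finset (Fin ℓ))) (h𝔄 : ∀ s ∈ 𝔄, s.card = ζ)
    (hsec : ∀ s ∈ 𝔄, mutInfo p M (fun ω (e : ↥s) => Y e.1 ω) = 0)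
    (α : (j : Fin ζ) → (Fin (j : ℕ) → 𝒳) → Fin ℓ)
    (hcompat : ∀ z : Fin ζ → 𝒳,
      (Finset.image
        (fun j : Fin ζ => α j (fun i => z ⟨i.1, i.2.trans j.2⟩)) Finset.univ) ∈ 𝔄)
    (Z : Ω → Fin ζ → 𝒳)
    (hZ : ∀ ω (j : Fin ζ),
      Z ω j = Y (α j (fun i => Z ω ⟨i.1, i.2.trans j.2⟩)) ω) :
    mutInfo p M Z = 0 :=
  adaptive_attack_perfect_secrecy_general p hp hp1 ℓ ζ M Y 𝔄 hsec α hcompat Z hZ
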